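/- arXiv:2410.10607 — 5 statements merged into one kernel-verified Lean document; each statement's English description precedes it below -/
import Mathlib

section
/- Let N ≥ 2 and m ≥ 1 be natural numbers and let e_1, …, e_m be natural numbers with e_k < N for every k ∈ {1,…,m}. If ∏_{k=1}^m (1 + N^k)^{e_k} = 1 in the ring ZMod (N^{m+1}), then e_k = 0 for every k ∈ {1,…,m}. -/
/-!
Reduce modulo `N ^ (j + 1)` and argue by strong induction on `j`. There the factors with
`k > j` are `1` because `N ^ k = 0`, those with `k < j` are `1` because `e k = 0` by induction,
and since `(N ^ j) ^ 2 = 0` the remaining factor is `(1 + N ^ j) ^ e j = 1 + e j * N ^ j`.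
Hence `N ^ (j + 1) ∣ e j * N ^ j`, i.e. `N ∣ e j`, which forces `e j = 0` as `e j < N`.
-/

theorem one_add_pow_of_sq_eq_zero {R : Type*} [CommRing R] {x : R} (hx : x ^ 2 = 0) (t : ℕ) :
    (1 + x) ^ t = 1 + t * x := by
  induction t with
  | zero => simp
  | succ t ih =>
    rw [pow_succ, ih]
    push_cast
    linear_combination (t : R) * hx

theorem prod_one_add_pow_pow_eq_single {R : Type*} [CommRing R] {x : R} {j : ℕ}
    (hx : x ^ (j + 1) = 0) {s : Finset ℕ} (hj : j ∈ s) {e : ℕ → ℕ}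
    (he : ∀ k ∈ s, k < j → e k = 0) :
    ∏ k ∈ s, (1 + x ^ k) ^ e k = (1 + x ^ j) ^ e j := by
  refine Finset.prod_eq_single_of_mem j hj fun k hk hkj => ?_
  rcases hkj.lt_or_gt with hlt | hgt
  · rw [he k hk hlt, pow_zero]
  · rw [pow_eq_zero_of_le hgt hx, add_zero, one_pow]

theorem ZMod.natCast_pow_self_pow_eq_zero (N n : ℕ) : (N : ZMod (N ^ n)) ^ n = 0 := by
  rw [← Nat.cast_pow, ZMod.natCast_self]

theorem ZMod.one_add_natCast_pow_pow_eq_one_iff {N j : ℕ} (hN : 0 < N) (hj : 1 ≤ j) (t : ℕ) :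
    ((1 : ZMod (N ^ (j + 1))) + (N : ZMod (N ^ (j + 1))) ^ j) ^ t = 1 ↔ N ∣ t := by
  have hsq : ((N : ZMod (N ^ (j + 1))) ^ j) ^ 2 = 0 := by
    rw [← pow_mul]
    exact pow_eq_zero_of_le (by omega) (ZMod.natCast_pow_self_pow_eq_zero N (j + 1))
  rw [one_add_pow_of_sq_eq_zero hsq, add_eq_left, ← Nat.cast_pow, ← Nat.cast_mul,
    ZMod.natCast_eq_zero_iff, pow_succ, mul_comm t, Nat.mul_dvd_mul_iff_left (by positivity)]

theorem prod_one_add_pow_eq_one_iff_exponents_zero_general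
    (N m : ℕ) (e : ℕ → ℕ)
    (he : ∀ k ∈ Finset.Icc 1 m, e k < N)
    (hprod : ∏ k ∈ Finset.Icc 1 m,
        ((1 : ZMod (N ^ (m + 1))) + (N : ZMod (N ^ (m + 1))) ^ k) ^ (e k) = 1) :
    ∀ k ∈ Finset.Icc 1 m, e k = 0 := by
  intro j
  induction j using Nat.strong_induction_on with
  | _ j ih =>
    intro hj
    obtain ⟨hj1, hjm⟩ := Finset.mem_Icc.mp hj
    have hdvd : N ^ (j + 1) ∣ N ^ (m + 1) := pow_dvd_pow N (by omega)
    have hfactor : ((1 : ZMod (N ^ (j + 1))) + (N : ZMod (N ^ (j + 1))) ^ j) ^ e j = 1 := by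
      rw [← prod_one_add_pow_pow_eq_single (ZMod.natCast_pow_self_pow_eq_zero N (j + 1)) hj
        fun k hk hkj => ih k hkj hk]
      simpa only [map_prod, map_pow, map_add, map_one, map_natCast] using
        congrArg (ZMod.castHom hdvd (ZMod (N ^ (j + 1)))) hprod
    have hNpos : 0 < N := (Nat.zero_le _).trans_lt (he j hj)
    have hNe : N ∣ e j := (ZMod.one_add_natCast_pow_pow_eq_one_iff hNpos hj1 (e j)).mp hfactor
    exact Nat.eq_zero_of_dvd_of_lt hNe (he j hj)

/-- Let `N ≥ 2`, `m ≥ 1` and `e : ℕ → ℕ` with `e k < N` for every `k ∈ {1,…,m}`.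
If `∏_{k=1}^m (1 + N^k)^(e k) = 1` in `ZMod (N^(m+1))`, then `e k = 0` for every
`k ∈ {1,…,m}`. -/
theorem prod_one_add_pow_eq_one_iff_exponents_zero
    (N m : ℕ) (hN : 2 ≤ N) (hm : 1 ≤ m) (e : ℕ → ℕ)
    (he : ∀ k ∈ Finset.Icc 1 m, e k < N)
    (hprod : ∏ k ∈ Finset.Icc 1 m,
        ((1 : ZMod (N ^ (m + 1))) + (N : ZMod (N ^ (m + 1))) ^ k) ^ (e k) = 1) :
    ∀ k ∈ Finset.Icc 1 m, e k = 0 :=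
  prod_one_add_pow_eq_one_iff_exponents_zero_general N m e he hprod
end

section
/- Let N ≥ 2 and m ≥ 1 be natural numbers. The subgroup of the unit group (ZMod (N^{m+1}))ˣ generated by the m units 1 + N^k for k ∈ {1,…,m} has cardinality exactly N^m. -/
private lemma pow_one_add_of_sq_zero {R : Type*} [CommRing R] (x : R) (hx : x * x = 0) (a : ℕ) :
    (1 + x) ^ a = 1 + (a : R) * x := by
  induction a with
  | zero => simp
  | succ a ih =>
    rw [pow_succ, ih]
    have h : (1 + (a : R) * x) * (1 + x) = 1 + ((a : R) + 1) * x + (a : R) * (x * x) := by ring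
    rw [h, hx]
    push_cast
    ring

/-- Let `N ≥ 2` and `m ≥ 1`. The subgroup of the unit group `(ZMod (N^(m+1)))ˣ`
generated by the `m` units `1 + N^k` for `k ∈ {1,…,m}` has cardinality exactly `N^m`. -/
theorem card_closure_one_add_pow_units
    (N m : ℕ) (hN : 2 ≤ N) (hm : 1 ≤ m) :
    Nat.card (Subgroup.closure
        {u : (ZMod (N ^ (m + 1)))ˣ | ∃ k ∈ Finset.Icc 1 m,
          (u : ZMod (N ^ (m + 1))) = 1 + (N : ZMod (N ^ (m + 1))) ^ k}) = N ^ m := by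
  have hN0 : 0 < N := by omega
  have hpownz : ∀ j : ℕ, NeZero (N ^ j) := fun j => ⟨pow_ne_zero j (by omega)⟩
  haveI := hpownz (m + 1)
  set S : Set (ZMod (N ^ (m + 1)))ˣ :=
    {u : (ZMod (N ^ (m + 1)))ˣ | ∃ k ∈ Finset.Icc 1 m,
      (u : ZMod (N ^ (m + 1))) = 1 + (N : ZMod (N ^ (m + 1))) ^ k} with hS
  -- the generating units
  have hcop : ∀ k : ℕ, Nat.Coprime (1 + N * N ^ k) (N ^ (m + 1)) := fun k =>
    Nat.Coprime.pow_right _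
      (by simp [(Nat.coprime_add_mul_left_left 1 N (N ^ k)).mpr (Nat.coprime_one_left N)])
  set u : Fin m → (ZMod (N ^ (m + 1)))ˣ :=
    fun i => ZMod.unitOfCoprime (1 + N * N ^ (i : ℕ)) (hcop i) with hu_def
  have hu : ∀ i : Fin m,
      ((u i : (ZMod (N ^ (m + 1)))ˣ) : ZMod (N ^ (m + 1)))
        = 1 + (N : ZMod (N ^ (m + 1))) ^ ((i : ℕ) + 1) := by
    intro i
    rw [hu_def]
    simp only [ZMod.coe_unitOfCoprime]
    push_cast
    ring
  have humem : ∀ i : Fin m, u i ∈ S := fun i =>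
    ⟨(i : ℕ) + 1, Finset.mem_Icc.mpr ⟨by omega, by have := i.isLt; omega⟩, hu i⟩
  set Φ : (Fin m → Fin N) → (ZMod (N ^ (m + 1)))ˣ :=
    fun e => ∏ i : Fin m, u i ^ ((e i : ℕ)) with hΦ_def
  have hΦmem : ∀ e, Φ e ∈ Subgroup.closure S := fun e =>
    Subgroup.prod_mem _ fun i _ =>
      Subgroup.pow_mem _ (Subgroup.subset_closure (humem i)) _
  -- key step for injectivity
  have key : ∀ e f : Fin m → Fin N, Φ e = Φ f →
      ∀ j : Fin m, (∀ i : Fin m, (i : ℕ) < (j : ℕ) → e i = f i) → e j = f j := by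
    intro e f h j hlt
    set K := (j : ℕ) + 1 with hK
    haveI := hpownz (K + 1)
    have hdvd : N ^ (K + 1) ∣ N ^ (m + 1) := pow_dvd_pow N (by have := j.isLt; omega)
    set π := ZMod.castHom hdvd (ZMod (N ^ (K + 1))) with hπ
    set w : Fin m → (ZMod (N ^ (K + 1)))ˣ := fun i => Units.map π.toMonoidHom (u i) with hw
    have hweq : ∏ i : Fin m, w i ^ ((e i : ℕ)) = ∏ i : Fin m, w i ^ ((f i : ℕ)) := by
      have h2 := congrArg (Units.map π.toMonoidHom) h
      simpa [hΦ_def, map_prod, map_pow, hw] using h2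
    have hwcoe : ∀ i : Fin m, ((w i : (ZMod (N ^ (K + 1)))ˣ) : ZMod (N ^ (K + 1)))
        = 1 + (N : ZMod (N ^ (K + 1))) ^ ((i : ℕ) + 1) := by
      intro i
      simp [hw, Units.coe_map, hu i, map_add, map_one, map_pow, map_natCast]
    have hzero : ∀ i : Fin m, (j : ℕ) < (i : ℕ) → w i = 1 := by
      intro i hij
      apply Units.ext
      rw [hwcoe i, Units.val_one]
      have hz : ((N ^ ((i : ℕ) + 1) : ℕ) : ZMod (N ^ (K + 1))) = 0 :=
        (ZMod.natCast_eq_zero_iff _ _).mpr (pow_dvd_pow N (by omega))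
      push_cast at hz
      rw [hz, add_zero]
    rw [← Finset.mul_prod_erase Finset.univ _ (Finset.mem_univ j),
        ← Finset.mul_prod_erase Finset.univ _ (Finset.mem_univ j)] at hweq
    have herased : ∏ i ∈ Finset.univ.erase j, w i ^ ((e i : ℕ))
        = ∏ i ∈ Finset.univ.erase j, w i ^ ((f i : ℕ)) := by
      apply Finset.prod_congr rfl
      intro i hi
      have hne : i ≠ j := (Finset.mem_erase.mp hi).1
      rcases Nat.lt_or_ge (i : ℕ) (j : ℕ) with hij | hij
      · rw [hlt i hij]
      · have hne' : (i : ℕ) ≠ (j : ℕ) := fun hc => hne (Fin.ext hc)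
        rw [hzero i (by omega), one_pow, one_pow]
    rw [herased] at hweq
    have hpow := mul_right_cancel hweq
    have hcoe : (1 + (N : ZMod (N ^ (K + 1))) ^ K) ^ ((e j : ℕ))
        = (1 + (N : ZMod (N ^ (K + 1))) ^ K) ^ ((f j : ℕ)) := by
      have h3 := congrArg (Units.coeHom (ZMod (N ^ (K + 1)))) hpow
      simpa [Units.coeHom_apply, Units.val_pow_eq_pow_val, hwcoe j] using h3
    have hx : (N : ZMod (N ^ (K + 1))) ^ K * (N : ZMod (N ^ (K + 1))) ^ K = 0 := by
      have h2 : ((N ^ (K + K) : ℕ) : ZMod (N ^ (K + 1))) = 0 :=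
        (ZMod.natCast_eq_zero_iff _ _).mpr (pow_dvd_pow N (by omega))
      push_cast at h2
      rw [← pow_add]
      exact h2
    rw [pow_one_add_of_sq_zero _ hx, pow_one_add_of_sq_zero _ hx] at hcoe
    have hmod1 : ((e j : ℕ) * N ^ K) ≡ ((f j : ℕ) * N ^ K) [MOD N ^ (K + 1)] := by
      rw [← ZMod.natCast_eq_natCast_iff]
      push_cast
      linear_combination hcoe
    have hKK : N ^ (K + 1) = N * N ^ K := by rw [pow_succ]; ring
    rw [hKK] at hmod1
    have hmod : (e j : ℕ) ≡ (f j : ℕ) [MOD N] :=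
      Nat.ModEq.mul_right_cancel' (pow_ne_zero K (by omega)) hmod1
    have := hmod
    unfold Nat.ModEq at this
    rw [Nat.mod_eq_of_lt (e j).isLt, Nat.mod_eq_of_lt (f j).isLt] at this
    exact Fin.ext this
  have hΦinj : Function.Injective Φ := by
    intro e f h
    have hall : ∀ n : ℕ, ∀ j : Fin m, (j : ℕ) ≤ n → e j = f j := by
      intro n
      induction n with
      | zero => intro j hj; exact key e f h j fun i hi => (Nat.not_lt_zero _ (hi.trans_le hj)).elim
      | succ n ih => intro j hj; exact key e f h j fun i hi => ih i (by omega)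
    funext j
    exact hall (j : ℕ) j le_rfl
  -- lower bound
  have hlow : N ^ m ≤ Nat.card (Subgroup.closure S) := by
    have hinj : Function.Injective (fun e : Fin m → Fin N =>
        (⟨Φ e, hΦmem e⟩ : Subgroup.closure S)) := fun e f hef =>
      hΦinj (Subtype.ext_iff.mp hef)
    calc N ^ m = Nat.card (Fin m → Fin N) := by
          simp [Nat.card_eq_fintype_card, Fintype.card_fun]
      _ ≤ _ := Nat.card_le_card_of_injective _ hinj
  -- upper bound
  have hdvdN : N ∣ N ^ (m + 1) := dvd_pow_self N (by omega)
  have hker : ∀ g ∈ Subgroup.closure S,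
      ((g : (ZMod (N ^ (m + 1)))ˣ) : ZMod (N ^ (m + 1))).val % N = 1 := by
    have hle : Subgroup.closure S ≤
        (Units.map (ZMod.castHom hdvdN (ZMod N)).toMonoidHom).ker := by
      rw [Subgroup.closure_le]
      rintro v ⟨k, hk, hv⟩
      have hk1 : 1 ≤ k := (Finset.mem_Icc.mp hk).1
      have hv1 : ((Units.map (ZMod.castHom hdvdN (ZMod N)).toMonoidHom v :
          (ZMod N)ˣ) : ZMod N) = 1 := by
        rw [Units.coe_map]
        simp only [RingHom.toMonoidHom_eq_coe, MonoidHom.coe_coe]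
        rw [hv, map_add, map_one, map_pow, map_natCast, ZMod.natCast_self,
          zero_pow (by omega), add_zero]
      exact MonoidHom.mem_ker.mpr (Units.ext (by simpa using hv1))
    intro g hg
    have h1 : ZMod.castHom hdvdN (ZMod N) ((g : (ZMod (N ^ (m + 1)))ˣ) : ZMod (N ^ (m + 1)))
        = 1 := by
      have h2 := hle hg
      rw [MonoidHom.mem_ker] at h2
      have h3 := congrArg (Units.coeHom (ZMod N)) h2
      simpa [Units.coe_map] using h3
    have h2 : ((((g : (ZMod (N ^ (m + 1)))ˣ) : ZMod (N ^ (m + 1))).val : ℕ) : ZMod N)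
        = ((1 : ℕ) : ZMod N) := by
      rw [ZMod.natCast_val, ← ZMod.castHom_apply (h := hdvdN)]
      simpa using h1
    have h3 := (ZMod.natCast_eq_natCast_iff' _ _ _).mp h2
    rwa [Nat.one_mod_eq_one.mpr (by omega)] at h3
  have hup : Nat.card (Subgroup.closure S) ≤ N ^ m := by
    have hbound : ∀ g : Subgroup.closure S,
        ((g : (ZMod (N ^ (m + 1)))ˣ) : ZMod (N ^ (m + 1))).val / N < N ^ m := by
      intro g
      rw [Nat.div_lt_iff_lt_mul hN0]
      have := ZMod.val_lt ((g : (ZMod (N ^ (m + 1)))ˣ) : ZMod (N ^ (m + 1)))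
      calc _ < N ^ (m + 1) := this
        _ = N ^ m * N := by rw [pow_succ]
    have hinj : Function.Injective (fun g : Subgroup.closure S =>
        (⟨((g : (ZMod (N ^ (m + 1)))ˣ) : ZMod (N ^ (m + 1))).val / N, hbound g⟩ :
          Fin (N ^ m))) := by
      rintro ⟨x, hx⟩ ⟨y, hy⟩ hxy
      simp only [Fin.mk.injEq] at hxy
      have hxy' : (x : ZMod (N ^ (m + 1))).val / N = (y : ZMod (N ^ (m + 1))).val / N := hxy
      clear hxy
      have e1 := hker x hx
      have e2 := hker y hy
      have hvals : (x : ZMod (N ^ (m + 1))).val = (y : ZMod (N ^ (m + 1))).val := by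
        calc (x : ZMod (N ^ (m + 1))).val
            = N * ((x : ZMod (N ^ (m + 1))).val / N) + (x : ZMod (N ^ (m + 1))).val % N :=
              (Nat.div_add_mod _ _).symm
          _ = N * ((y : ZMod (N ^ (m + 1))).val / N) + (y : ZMod (N ^ (m + 1))).val % N := by
              rw [hxy', e1, e2]
          _ = (y : ZMod (N ^ (m + 1))).val := Nat.div_add_mod _ _
      exact Subtype.ext (Units.ext (ZMod.val_injective _ hvals))
    calc Nat.card (Subgroup.closure S) ≤ Nat.card (Fin (N ^ m)) :=
          Nat.card_le_card_of_injective _ hinj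
      _ = N ^ m := by simp
  exact le_antisymm hup hlow
end

section
/- Let p, q, p', q' be pairwise distinct odd primes with p = 2p' + 1 and q = 2q' + 1, set N = p·q, and let m ≥ 1. Then for every unit w of the ring ZMod (N^{m+1}) there exist a unit x of ZMod N and residues e_1, …, e_m ∈ ZMod N, both uniquely determined, such that w = (x̃)^N · ∏_{k=1}^m (1 + N^k)^{val(e_k)} in ZMod (N^{m+1}), where x̃ denotes the canonical lift of x to ZMod (N^{m+1}) (the image of the natural number representative val(x) of x), and val(e_k) < N is the natural number representative of e_k. -/
open Finset

private lemma aux_isUnit_prod {M ι : Type*} [CommMonoid M] (s : Finset ι) (f : ι → M)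
    (h : ∀ i ∈ s, IsUnit (f i)) : IsUnit (∏ i ∈ s, f i) :=
  Finset.prod_induction f IsUnit (fun _ _ => IsUnit.mul) isUnit_one h

private lemma aux_one_add_pow {R : Type*} [CommRing R] (t : R) (ht : t * t = 0) (e : ℕ) :
    (1 + t) ^ e = 1 + (e : R) * t := by
  induction e with
  | zero => simp
  | succ n ih =>
    rw [pow_succ, ih]
    have : (1 + (n : R) * t) * (1 + t) = 1 + ((n : R) + 1) * t + (n : R) * (t * t) := by ring
    rw [this, ht]
    push_cast
    ring

private lemma aux_cast_pow_zero (N a b : ℕ) (h : a ≤ b) :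
    ((N : ZMod (N ^ a))) ^ b = 0 := by
  have h0 : ((N : ZMod (N ^ a))) ^ a = 0 := by
    rw [← Nat.cast_pow]
    exact ZMod.natCast_self _
  have hb : b = a + (b - a) := by omega
  rw [hb, pow_add, h0, zero_mul]

/-- Injectivity of the `e ↦ ∏ (1+N^k)^{e_k}` part. -/
private lemma aux_prod_inj (N m : ℕ) (hN : 1 < N) (a b : Fin m → ℕ)
    (ha : ∀ k, a k < N) (hb : ∀ k, b k < N)
    (h : ∏ k : Fin m, ((1 : ZMod (N ^ (m + 1))) + (N : ZMod (N ^ (m + 1))) ^ (k.val + 1)) ^ a k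
       = ∏ k : Fin m, ((1 : ZMod (N ^ (m + 1))) + (N : ZMod (N ^ (m + 1))) ^ (k.val + 1)) ^ b k) :
    a = b := by
  have key : ∀ n : ℕ, ∀ j : Fin m, j.val = n → a j = b j := by
    intro n
    induction n using Nat.strong_induction_on with
    | _ n IH =>
      intro j hj
      have IH' : ∀ i : Fin m, i.val < j.val → a i = b i := fun i hi => IH i.val (hj ▸ hi) i rfl
      -- move to `ZMod (N ^ (j.val + 2))`
      set J := j.val with hJ
      have hdvd : N ^ (J + 2) ∣ N ^ (m + 1) := pow_dvd_pow N (by omega)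
      let φ : ZMod (N ^ (m + 1)) →+* ZMod (N ^ (J + 2)) := ZMod.castHom hdvd _
      have h2 := congrArg φ h
      rw [map_prod, map_prod] at h2
      have hφ : ∀ (k : Fin m) (e : ℕ),
          φ (((1 : ZMod (N ^ (m + 1))) + (N : ZMod (N ^ (m + 1))) ^ (k.val + 1)) ^ e)
            = ((1 : ZMod (N ^ (J + 2))) + (N : ZMod (N ^ (J + 2))) ^ (k.val + 1)) ^ e := by
        intro k e
        rw [map_pow, map_add, map_one, map_pow, map_natCast]
      simp only [hφ] at h2
      set G : Fin m → ZMod (N ^ (J + 2)) :=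
        fun k => (1 : ZMod (N ^ (J + 2))) + (N : ZMod (N ^ (J + 2))) ^ (k.val + 1) with hG
      have hmem : j ∈ (univ : Finset (Fin m)) := mem_univ j
      rw [← Finset.mul_prod_erase univ _ hmem, ← Finset.mul_prod_erase univ (fun k => G k ^ b k) hmem] at h2
      -- the two erased products agree
      have hsame : ∏ k ∈ univ.erase j, G k ^ a k = ∏ k ∈ univ.erase j, G k ^ b k := by
        apply Finset.prod_congr rfl
        intro k hk
        have hkj : k ≠ j := (Finset.mem_erase.mp hk).1
        rcases lt_trichotomy k.val j.val with hlt | heq | hgt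
        · rw [IH' k hlt]
        · exact absurd (Fin.ext heq) hkj
        · have hz : (N : ZMod (N ^ (J + 2))) ^ (k.val + 1) = 0 :=
            aux_cast_pow_zero N (J + 2) (k.val + 1) (by omega)
          rw [hG]
          simp only [hz, add_zero, one_pow]
      rw [hsame] at h2
      -- cancel the unit product
      have hunit : IsUnit (∏ k ∈ univ.erase j, G k ^ b k) := by
        apply aux_isUnit_prod
        intro k _
        apply IsUnit.pow
        apply IsNilpotent.isUnit_one_add
        exact ⟨J + 2, by
          rw [← pow_mul]
          exact aux_cast_pow_zero N (J + 2) ((k.val + 1) * (J + 2)) (by nlinarith)⟩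
      have h3 : G j ^ a j = G j ^ b j := by
        apply hunit.mul_left_cancel
        rw [mul_comm _ (G j ^ a j), mul_comm _ (G j ^ b j)]
        exact h2
      -- expand with the binomial identity
      have ht : ((N : ZMod (N ^ (J + 2))) ^ (J + 1)) * ((N : ZMod (N ^ (J + 2))) ^ (J + 1)) = 0 := by
        rw [← pow_add]
        exact aux_cast_pow_zero N (J + 2) (J + 1 + (J + 1)) (by omega)
      rw [hG] at h3
      simp only at h3
      rw [aux_one_add_pow _ ht, aux_one_add_pow _ ht] at h3
      have h4 : ((a j : ZMod (N ^ (J + 2)))) * (N : ZMod (N ^ (J + 2))) ^ (J + 1)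
          = ((b j : ZMod (N ^ (J + 2)))) * (N : ZMod (N ^ (J + 2))) ^ (J + 1) := by
        have := add_left_cancel h3
        exact this
      have h5 : ((a j * N ^ (J + 1) : ℕ) : ZMod (N ^ (J + 2))) = ((b j * N ^ (J + 1) : ℕ) : ZMod (N ^ (J + 2))) := by
        push_cast
        exact h4
      have h6 : a j * N ^ (J + 1) ≡ b j * N ^ (J + 1) [MOD N ^ (J + 2)] :=
        (ZMod.natCast_eq_natCast_iff _ _ _).mp h5
      have h7 : a j ≡ b j [MOD N] := by
        apply Nat.ModEq.mul_right_cancel' (c := N ^ (J + 1)) (pow_ne_zero _ (by omega))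
        have : N * N ^ (J + 1) = N ^ (J + 2) := by ring
        rwa [this]
      have h8 : a j % N = b j % N := h7
      rwa [Nat.mod_eq_of_lt (ha j), Nat.mod_eq_of_lt (hb j)] at h8
  funext j
  exact key j.val j rfl

/-- Decomposition of the unit group of `ZMod (N^(m+1))` for a strong RSA integer
`N = p·q` (with `p = 2p'+1`, `q = 2q'+1`, and `p, q, p', q'` pairwise distinct odd
primes): every unit `w` of `ZMod (N^(m+1))` is uniquely the product of an `N`-th
power of (the lift of) a unit `x` of `ZMod N` and `∏_{k=1}^m (1 + N^k)^(e_k)` with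
residues `e_k ∈ ZMod N`. -/
theorem strong_rsa_unit_group_decomposition
    (p q p' q' : ℕ) (hp : p.Prime) (hq : q.Prime) (hp' : p'.Prime) (hq' : q'.Prime)
    (hop : Odd p) (hoq : Odd q) (hop' : Odd p') (hoq' : Odd q')
    (hpq : p ≠ q) (hpp' : p ≠ p') (hpq' : p ≠ q') (hqp' : q ≠ p') (hqq' : q ≠ q')
    (hp'q' : p' ≠ q')
    (hpe : p = 2 * p' + 1) (hqe : q = 2 * q' + 1)
    (N : ℕ) (hN : N = p * q) (m : ℕ) (hm : 1 ≤ m)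
    (w : (ZMod (N ^ (m + 1)))ˣ) :
    ∃! xe : (ZMod N)ˣ × (Fin m → ZMod N),
      (w : ZMod (N ^ (m + 1))) =
        (((xe.1 : ZMod N).val : ZMod (N ^ (m + 1)))) ^ N *
          ∏ k : Fin m,
            ((1 : ZMod (N ^ (m + 1))) + (N : ZMod (N ^ (m + 1))) ^ (k.val + 1))
              ^ (xe.2 k).val := by
  have hp2 : 2 ≤ p := hp.two_le
  have hq2 : 2 ≤ q := hq.two_le
  have hN1 : 1 < N := by rw [hN]; nlinarith
  haveI : NeZero N := ⟨by omega⟩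
  haveI : NeZero (N ^ (m + 1)) := ⟨pow_ne_zero _ (by omega)⟩
  have hp_ne_two : p ≠ 2 := by
    rintro rfl
    rw [Nat.odd_iff] at hop
    omega
  have hq_ne_two : q ≠ 2 := by
    rintro rfl
    rw [Nat.odd_iff] at hoq
    omega
  -- `φ(N)` is coprime to `N`
  have htotN : N.totient = (p - 1) * (q - 1) := by
    rw [hN, Nat.totient_mul ((Nat.coprime_primes hp hq).mpr hpq),
      Nat.totient_prime hp, Nat.totient_prime hq]
  have hcop_tot : (N.totient).Coprime N := by
    rw [htotN, hN, hpe, hqe]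
    have e1 : 2 * p' + 1 - 1 = 2 * p' := by omega
    have e2 : 2 * q' + 1 - 1 = 2 * q' := by omega
    rw [e1, e2]
    have cp2 : Nat.Coprime p 2 := (Nat.coprime_primes hp Nat.prime_two).mpr hp_ne_two
    have cq2 : Nat.Coprime q 2 := (Nat.coprime_primes hq Nat.prime_two).mpr hq_ne_two
    have cpp' : Nat.Coprime p p' := (Nat.coprime_primes hp hp').mpr hpp'
    have cpq' : Nat.Coprime p q' := (Nat.coprime_primes hp hq').mpr hpq'
    have cqp' : Nat.Coprime q p' := (Nat.coprime_primes hq hp').mpr hqp'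
    have cqq' : Nat.Coprime q q' := (Nat.coprime_primes hq hq').mpr hqq'
    have hcp : Nat.Coprime p (2 * p' * (2 * q')) :=
      ((cp2.mul_right cpp').mul_right (cp2.mul_right cpq'))
    have hcq : Nat.Coprime q (2 * p' * (2 * q')) :=
      ((cq2.mul_right cqp').mul_right (cq2.mul_right cqq'))
    rw [hpe] at hcp
    rw [hqe] at hcq
    exact (Nat.Coprime.mul hcp hcq).symm
  -- value map
  set g : (ZMod N)ˣ × (Fin m → ZMod N) → ZMod (N ^ (m + 1)) :=
    fun xe =>
      (((xe.1 : ZMod N).val : ZMod (N ^ (m + 1)))) ^ N *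
        ∏ k : Fin m,
          ((1 : ZMod (N ^ (m + 1))) + (N : ZMod (N ^ (m + 1))) ^ (k.val + 1)) ^ (xe.2 k).val
    with hg
  have hcard_units : Nat.card (ZMod N)ˣ = N.totient := by
    rw [Nat.card_eq_fintype_card, ZMod.card_units_eq_totient]
  -- injectivity of the value map
  have ginj : Function.Injective g := by
    rintro ⟨x1, e1⟩ ⟨x2, e2⟩ hgeq
    simp only [hg] at hgeq
    -- reduce mod N to get x1 = x2
    have hdvdN : N ∣ N ^ (m + 1) := dvd_pow_self N (by omega)
    have hx : x1 = x2 := by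
      have h1 := congrArg (ZMod.castHom hdvdN (ZMod N)) hgeq
      rw [map_mul, map_mul, map_pow, map_pow, map_prod, map_prod, map_natCast, map_natCast] at h1
      have hone : ∀ (e : Fin m → ZMod N) (k : Fin m), k ∈ (univ : Finset (Fin m)) →
          (ZMod.castHom hdvdN (ZMod N))
            (((1 : ZMod (N ^ (m + 1))) + (N : ZMod (N ^ (m + 1))) ^ (k.val + 1)) ^ (e k).val)
          = 1 := by
        intro e k _
        rw [map_pow, map_add, map_one, map_pow, map_natCast, ZMod.natCast_self]
        simp
      rw [Finset.prod_congr rfl (hone e1), Finset.prod_congr rfl (hone e2)] at h1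
      simp only [Finset.prod_const_one, mul_one] at h1
      have hv1 : (((x1 : ZMod N).val : ZMod N)) = (x1 : ZMod N) := by
        simp [ZMod.natCast_val, ZMod.cast_id]
      have hv2 : (((x2 : ZMod N).val : ZMod N)) = (x2 : ZMod N) := by
        simp [ZMod.natCast_val, ZMod.cast_id]
      rw [hv1, hv2] at h1
      have hu : x1 ^ N = x2 ^ N := by
        apply Units.ext
        rw [Units.val_pow_eq_pow_val, Units.val_pow_eq_pow_val]
        exact h1
      exact (powCoprime (hcard_units ▸ hcop_tot)).injective hu
    subst hx
    -- cancel the unit first factor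
    have hcopr : Nat.Coprime (x1 : ZMod N).val (N ^ (m + 1)) :=
      (ZMod.val_coe_unit_coprime x1).pow_right _
    have hu1 : IsUnit ((((x1 : ZMod N).val : ZMod (N ^ (m + 1)))) ^ N) := by
      apply IsUnit.pow
      exact ⟨ZMod.unitOfCoprime _ hcopr, (ZMod.coe_unitOfCoprime _ hcopr)⟩
    have hprodeq := hu1.mul_left_cancel hgeq
    have hvals : (fun k => (e1 k).val) = fun k => (e2 k).val :=
      aux_prod_inj N m hN1 _ _ (fun k => ZMod.val_lt _) (fun k => ZMod.val_lt _) hprodeq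
    have he : e1 = e2 := by
      funext k
      exact ZMod.val_injective N (congrFun hvals k)
    rw [he]
  -- unit-valued map
  have hunit_g : ∀ xe, IsUnit (g xe) := by
    intro xe
    apply IsUnit.mul
    · exact IsUnit.pow _ ⟨ZMod.unitOfCoprime _ ((ZMod.val_coe_unit_coprime xe.1).pow_right (m + 1)),
        ZMod.coe_unitOfCoprime _ _⟩
    · apply aux_isUnit_prod
      intro k _
      apply IsUnit.pow
      apply IsNilpotent.isUnit_one_add
      exact ⟨m + 1, by
        rw [← pow_mul]
        exact aux_cast_pow_zero N (m + 1) ((k.val + 1) * (m + 1)) (by nlinarith)⟩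
  let F : (ZMod N)ˣ × (Fin m → ZMod N) → (ZMod (N ^ (m + 1)))ˣ := fun xe => (hunit_g xe).unit
  have hF : ∀ xe, ((F xe : (ZMod (N ^ (m + 1)))ˣ) : ZMod (N ^ (m + 1))) = g xe :=
    fun xe => (hunit_g xe).unit_spec
  have Finj : Function.Injective F := by
    intro a b hab
    apply ginj
    rw [← hF a, ← hF b, hab]
  -- cardinalities agree
  have hcards : Fintype.card ((ZMod N)ˣ × (Fin m → ZMod N))
      = Fintype.card (ZMod (N ^ (m + 1)))ˣ := by
    rw [Fintype.card_prod, ZMod.card_units_eq_totient, Fintype.card_fun, ZMod.card,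
      Fintype.card_fin, ZMod.card_units_eq_totient]
    have hNpow : N ^ (m + 1) = p ^ (m + 1) * q ^ (m + 1) := by rw [hN, mul_pow]
    have hcoppow : Nat.Coprime (p ^ (m + 1)) (q ^ (m + 1)) :=
      (((Nat.coprime_primes hp hq).mpr hpq).pow_right _).pow_left _
    rw [hNpow, Nat.totient_mul hcoppow, Nat.totient_prime_pow hp (by omega),
      Nat.totient_prime_pow hq (by omega), htotN, hN]
    simp only [Nat.add_sub_cancel]
    ring
  have Fbij : Function.Bijective F :=
    (Fintype.bijective_iff_injective_and_card F).mpr ⟨Finj, hcards⟩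
  obtain ⟨xe, hxe⟩ := Fbij.2 w
  refine ⟨xe, ?_, ?_⟩
  · show (w : ZMod (N ^ (m + 1))) = _
    rw [← hxe, hF]
  · intro ye hy
    apply ginj
    have h' : g ye = (w : ZMod (N ^ (m + 1))) := hy.symm
    have h2w : (w : ZMod (N ^ (m + 1))) = g xe := by
      rw [← hxe]
      exact hF xe
    exact h'.trans h2w
end

section
/- Let N ≥ 2, m ≥ 1 and T be natural numbers, let g be a unit of ZMod (N^{m+1}) and set h = g^{2^T} in ZMod (N^{m+1}). For each i ∈ {1,…,m} let r_i and e_i be natural numbers with e_i < N, and define u_i = g^{r_i} and w_i = h^{N·r_i} · (1 + N^i)^{e_i} in ZMod (N^{m+1}); let U = ∏_{i=1}^m u_i and W = ∏_{i=1}^m w_i. Then for every k ∈ {1,…,m}, applying the canonical ring homomorphism π_k : ZMod (N^{m+1}) → ZMod (N^{k+1}) (which exists since N^{k+1} divides N^{m+1}), one has π_k(W) = π_k(U)^{2^T · N} · (∏_{i=1}^{k-1} (1 + N^i)^{e_i}) · (1 + e_k · N^k) in ZMod (N^{k+1}). -/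
lemma one_add_sq_zero_pow {R : Type*} [CommRing R] (x : R) (hx : x * x = 0) (n : ℕ) :
    (1 + x) ^ n = 1 + n * x := by
  induction n with
  | zero => simp
  | succ n ih =>
    rw [pow_succ, ih]
    push_cast
    ring_nf
    rw [pow_two x, hx]
    ring
/-- Correctness of the aggregatable timed commitment scheme: with `h = g^(2^T)`,
`u_i = g^(r_i)`, `w_i = h^(N·r_i)·(1+N^i)^(e_i)` (for `i ∈ {1,…,m}`, `e_i < N`),
`U = ∏ u_i`, `W = ∏ w_i`, reducing modulo `N^(k+1)` for each `k ∈ {1,…,m}` yields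
`π_k(W) = π_k(U)^(2^T·N) · (∏_{i=1}^{k-1} (1+N^i)^(e_i)) · (1 + e_k·N^k)`. -/
theorem aggregatable_timed_commitment_correctness
    (N m T : ℕ) (hN : 2 ≤ N) (hm : 1 ≤ m)
    (g : ZMod (N ^ (m + 1))) (hg : IsUnit g)
    (h : ZMod (N ^ (m + 1))) (hh : h = g ^ (2 ^ T))
    (r e : ℕ → ℕ) (he : ∀ i ∈ Finset.Icc 1 m, e i < N)
    (u w : ℕ → ZMod (N ^ (m + 1)))
    (hu : ∀ i ∈ Finset.Icc 1 m, u i = g ^ (r i))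
    (hw : ∀ i ∈ Finset.Icc 1 m,
      w i = h ^ (N * r i) *
        ((1 : ZMod (N ^ (m + 1))) + (N : ZMod (N ^ (m + 1))) ^ i) ^ (e i))
    (U W : ZMod (N ^ (m + 1)))
    (hU : U = ∏ i ∈ Finset.Icc 1 m, u i)
    (hW : W = ∏ i ∈ Finset.Icc 1 m, w i) :
    ∀ k, ∀ hk : k ∈ Finset.Icc 1 m,
      (ZMod.castHom
          (pow_dvd_pow N (by
            have := (Finset.mem_Icc.mp hk).2
            omega : k + 1 ≤ m + 1))
          (ZMod (N ^ (k + 1)))) W =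
        ((ZMod.castHom
            (pow_dvd_pow N (by
              have := (Finset.mem_Icc.mp hk).2
              omega : k + 1 ≤ m + 1))
            (ZMod (N ^ (k + 1)))) U) ^ (2 ^ T * N) *
          (∏ i ∈ Finset.Ico 1 k,
            ((1 : ZMod (N ^ (k + 1))) + (N : ZMod (N ^ (k + 1))) ^ i) ^ (e i)) *
          (1 + (e k : ZMod (N ^ (k + 1))) * (N : ZMod (N ^ (k + 1))) ^ k) := by
  intro k hk
  obtain ⟨hk1, hkm⟩ := Finset.mem_Icc.mp hk
  set π := ZMod.castHom (pow_dvd_pow N (by omega : k + 1 ≤ m + 1)) (ZMod (N ^ (k + 1))) with hπ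
  -- N^i = 0 in ZMod (N^(k+1)) for i ≥ k+1
  have hzero : ∀ i : ℕ, k + 1 ≤ i → ((N : ZMod (N ^ (k + 1))) ^ i) = 0 := by
    intro i hi
    have : ((N ^ i : ℕ) : ZMod (N ^ (k + 1))) = 0 := by
      rw [ZMod.natCast_eq_zero_iff]
      exact pow_dvd_pow N hi
    simpa using this
  -- π U
  have hπU : π U = (π g) ^ (∑ i ∈ Finset.Icc 1 m, r i) := by
    rw [hU, map_prod, ← Finset.prod_pow_eq_pow_sum]
    exact Finset.prod_congr rfl fun i hi => by rw [hu i hi, map_pow]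
  -- π W
  have hπW : π W = (π g) ^ (2 ^ T * N * ∑ i ∈ Finset.Icc 1 m, r i) *
      ∏ i ∈ Finset.Icc 1 m,
        ((1 : ZMod (N ^ (k + 1))) + (N : ZMod (N ^ (k + 1))) ^ i) ^ (e i) := by
    rw [hW, map_prod]
    have hterm : ∀ i ∈ Finset.Icc 1 m, π (w i) =
        (π g) ^ (2 ^ T * N * r i) *
          ((1 : ZMod (N ^ (k + 1))) + (N : ZMod (N ^ (k + 1))) ^ i) ^ (e i) := by
      intro i hi
      rw [hw i hi, map_mul, hh, ← pow_mul, ← mul_assoc, map_pow]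
      congr 1
      simp
    rw [Finset.prod_congr rfl hterm, Finset.prod_mul_distrib,
      Finset.prod_pow_eq_pow_sum, Finset.mul_sum]
  -- split the product
  have hkk : ((N : ZMod (N ^ (k + 1))) ^ k) * ((N : ZMod (N ^ (k + 1))) ^ k) = 0 := by
    rw [← pow_add]
    exact hzero _ (by omega)
  have hsplit : (∏ i ∈ Finset.Icc 1 m,
      ((1 : ZMod (N ^ (k + 1))) + (N : ZMod (N ^ (k + 1))) ^ i) ^ (e i)) =
      (∏ i ∈ Finset.Ico 1 k,
        ((1 : ZMod (N ^ (k + 1))) + (N : ZMod (N ^ (k + 1))) ^ i) ^ (e i)) *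
      (1 + (e k : ZMod (N ^ (k + 1))) * (N : ZMod (N ^ (k + 1))) ^ k) := by
    have h1 : Finset.Icc 1 m = Finset.Ico 1 (m + 1) := by
      rw [Finset.Ico_add_one_right_eq_Icc]
    rw [h1, ← Finset.prod_Ico_consecutive _ (by omega : 1 ≤ k) (by omega : k ≤ m + 1),
      Finset.prod_eq_prod_Ico_succ_bot (by omega : k < m + 1)]
    have htail : (∏ i ∈ Finset.Ico (k + 1) (m + 1),
        ((1 : ZMod (N ^ (k + 1))) + (N : ZMod (N ^ (k + 1))) ^ i) ^ (e i)) = 1 := by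
      apply Finset.prod_eq_one
      intro i hi
      rw [hzero i (Finset.mem_Ico.mp hi).1]
      simp
    rw [htail, mul_one, one_add_sq_zero_pow _ hkk]
  rw [hπW, hsplit, hπU, ← pow_mul, mul_comm (∑ i ∈ Finset.Icc 1 m, r i)]
  ring
end

section
/- Let n ≥ 1 be a natural number, L ≥ 1 a real number, f : ℝ → ℝ continuous and nonnegative on [1, L] with ∫_1^L f(z) dz = 1, and define F(l) = ∫_1^l f(z) dz. Let x̄ : ℝ → ℝ be continuous on [1, L]. Then n · ∫_1^L (l·x̄(l) − ∫_1^l x̄(z) dz) · F(l)^{n−1} · f(l) dl = ∫_1^L (n·l·F(l)^{n−1}·f(l) − (1 − F(l)^n)) · x̄(l) dl. -/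
open intervalIntegral MeasureTheory

private lemma core_virtual_value
    (n : ℕ) (hn : 1 ≤ n) (L : ℝ)
    (g h : ℝ → ℝ) (hg : Continuous g) (hh : Continuous h)
    (hmass : (∫ z in (1 : ℝ)..L, g z) = 1) :
    (n : ℝ) * ∫ l in (1 : ℝ)..L,
        (l * h l - ∫ z in (1 : ℝ)..l, h z) * (∫ z in (1 : ℝ)..l, g z) ^ (n - 1) * g l
      = ∫ l in (1 : ℝ)..L,
          ((n : ℝ) * l * (∫ z in (1 : ℝ)..l, g z) ^ (n - 1) * g l
            - (1 - (∫ z in (1 : ℝ)..l, g z) ^ n)) * h l := by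
  set Fg : ℝ → ℝ := fun l => ∫ z in (1 : ℝ)..l, g z with hFgdef
  set G : ℝ → ℝ := fun l => ∫ z in (1 : ℝ)..l, h z with hGdef
  have hFg : ∀ l : ℝ, HasDerivAt Fg (g l) l := fun l =>
    intervalIntegral.integral_hasDerivAt_right (hg.intervalIntegrable _ _)
      (hg.stronglyMeasurableAtFilter _ _) hg.continuousAt
  have hG : ∀ l : ℝ, HasDerivAt G (h l) l := fun l =>
    intervalIntegral.integral_hasDerivAt_right (hh.intervalIntegrable _ _)
      (hh.stronglyMeasurableAtFilter _ _) hh.continuousAt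
  have hFgc : Continuous Fg := by
    rw [continuous_iff_continuousAt]; exact fun l => (hFg l).continuousAt
  have hGc : Continuous G := by
    rw [continuous_iff_continuousAt]; exact fun l => (hG l).continuousAt
  have hFg1 : Fg 1 = 0 := intervalIntegral.integral_same
  have hFgL : Fg L = 1 := hmass
  -- integration by parts
  have ibp : (∫ l in (1 : ℝ)..L, G l * ((n : ℝ) * Fg l ^ (n - 1) * g l))
      = G L - ∫ l in (1 : ℝ)..L, h l * Fg l ^ n := by
    have := intervalIntegral.integral_mul_deriv_eq_deriv_mul
      (u := G) (u' := h) (v := fun l => Fg l ^ n)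
      (v' := fun l => (n : ℝ) * Fg l ^ (n - 1) * g l)
      (a := 1) (b := L)
      (fun x _ => hG x) (fun x _ => (hFg x).pow n)
      (hh.intervalIntegrable _ _)
      (((continuous_const.mul (hFgc.pow _)).mul hg).intervalIntegrable _ _)
    rw [this]
    beta_reduce
    rw [hFg1, hFgL, one_pow, zero_pow (by omega : n ≠ 0)]
    ring
  have hA : IntervalIntegrable (fun l => l * h l * Fg l ^ (n - 1) * g l) volume 1 L :=
    (((continuous_id.mul hh).mul (hFgc.pow _)).mul hg).intervalIntegrable _ _
  have hB : IntervalIntegrable (fun l => G l * ((n : ℝ) * Fg l ^ (n - 1) * g l)) volume 1 L :=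
    (hGc.mul ((continuous_const.mul (hFgc.pow _)).mul hg)).intervalIntegrable _ _
  have hC : IntervalIntegrable (fun l => (1 - Fg l ^ n) * h l) volume 1 L :=
    ((continuous_const.sub (hFgc.pow _)).mul hh).intervalIntegrable _ _
  have lhs_eq : (n : ℝ) * ∫ l in (1 : ℝ)..L, (l * h l - G l) * Fg l ^ (n - 1) * g l
      = (∫ l in (1 : ℝ)..L, (n : ℝ) * (l * h l * Fg l ^ (n - 1) * g l))
        - ∫ l in (1 : ℝ)..L, G l * ((n : ℝ) * Fg l ^ (n - 1) * g l) := by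
    rw [← intervalIntegral.integral_const_mul,
      show (fun l => (n : ℝ) * ((l * h l - G l) * Fg l ^ (n - 1) * g l))
          = fun l => (n : ℝ) * (l * h l * Fg l ^ (n - 1) * g l)
            - G l * ((n : ℝ) * Fg l ^ (n - 1) * g l) from funext fun l => by ring,
      intervalIntegral.integral_sub (hA.const_mul _) hB]
  have rhs_eq : (∫ l in (1 : ℝ)..L,
        ((n : ℝ) * l * Fg l ^ (n - 1) * g l - (1 - Fg l ^ n)) * h l)
      = (∫ l in (1 : ℝ)..L, (n : ℝ) * (l * h l * Fg l ^ (n - 1) * g l))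
        - ∫ l in (1 : ℝ)..L, (1 - Fg l ^ n) * h l := by
    rw [← intervalIntegral.integral_sub (hA.const_mul _) hC]
    congr 1; funext l; ring
  have hCeq : (∫ l in (1 : ℝ)..L, (1 - Fg l ^ n) * h l)
      = G L - ∫ l in (1 : ℝ)..L, h l * Fg l ^ n := by
    have hint : IntervalIntegrable (fun l => h l * Fg l ^ n) volume 1 L :=
      (hh.mul (hFgc.pow _)).intervalIntegrable _ _
    rw [show G L = ∫ l in (1 : ℝ)..L, h l from rfl,
      ← intervalIntegral.integral_sub (hh.intervalIntegrable _ _) hint]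
    congr 1; funext l; ring
  rw [lhs_eq, rhs_eq, ibp, hCeq]

/-- Rewriting the expected maximum payment as an expectation of virtual values:
`n·∫_1^L (l·x̄(l) − ∫_1^l x̄)·F(l)^(n−1)·f(l) dl
  = ∫_1^L (n·l·F(l)^(n−1)·f(l) − (1 − F(l)^n))·x̄(l) dl`. -/
theorem expected_max_payment_virtual_value
    (n : ℕ) (hn : 1 ≤ n) (L : ℝ) (hL : 1 ≤ L)
    (f : ℝ → ℝ) (hfc : ContinuousOn f (Set.Icc 1 L))
    (hfnonneg : ∀ z ∈ Set.Icc (1 : ℝ) L, 0 ≤ f z)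
    (hfmass : (∫ z in (1 : ℝ)..L, f z) = 1)
    (F : ℝ → ℝ) (hF : ∀ l, F l = ∫ z in (1 : ℝ)..l, f z)
    (xb : ℝ → ℝ) (hxb : ContinuousOn xb (Set.Icc 1 L)) :
    (n : ℝ) * ∫ l in (1 : ℝ)..L,
        (l * xb l - ∫ z in (1 : ℝ)..l, xb z) * F l ^ (n - 1) * f l
      = ∫ l in (1 : ℝ)..L,
          ((n : ℝ) * l * F l ^ (n - 1) * f l - (1 - F l ^ n)) * xb l := by
  -- clamp to [1, L]
  set c : ℝ → ℝ := fun z => min L (max 1 z) with hcdef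
  have hcc : Continuous c := continuous_const.min (continuous_const.max continuous_id)
  have hcrange : ∀ z, c z ∈ Set.Icc (1 : ℝ) L := fun z =>
    ⟨le_min hL (le_max_left _ _), min_le_left _ _⟩
  have hcid : ∀ z ∈ Set.Icc (1 : ℝ) L, c z = z := fun z hz => by
    simp [hcdef, max_eq_right hz.1, min_eq_right hz.2]
  set g : ℝ → ℝ := f ∘ c with hgdef
  set h : ℝ → ℝ := xb ∘ c with hhdef
  have hg : Continuous g := hfc.comp_continuous hcc hcrange
  have hh : Continuous h := hxb.comp_continuous hcc hcrange
  have heqf : ∀ z ∈ Set.Icc (1 : ℝ) L, f z = g z := fun z hz => by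
    simp [hgdef, Function.comp, hcid z hz]
  have heqx : ∀ z ∈ Set.Icc (1 : ℝ) L, xb z = h z := fun z hz => by
    simp [hhdef, Function.comp, hcid z hz]
  have hsub : ∀ l ∈ Set.Icc (1 : ℝ) L, Set.uIcc (1 : ℝ) l ⊆ Set.Icc 1 L := fun l hl => by
    rw [Set.uIcc_of_le hl.1]; exact Set.Icc_subset_Icc le_rfl hl.2
  have hFcong : ∀ l ∈ Set.Icc (1 : ℝ) L, F l = ∫ z in (1 : ℝ)..l, g z := fun l hl => by
    rw [hF l]; exact intervalIntegral.integral_congr (fun z hz => heqf z (hsub l hl hz))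
  have hGcong : ∀ l ∈ Set.Icc (1 : ℝ) L,
      (∫ z in (1 : ℝ)..l, xb z) = ∫ z in (1 : ℝ)..l, h z := fun l hl =>
    intervalIntegral.integral_congr (fun z hz => heqx z (hsub l hl hz))
  have hmass : (∫ z in (1 : ℝ)..L, g z) = 1 := by
    rw [← hFcong L ⟨hL, le_rfl⟩, hF L]; exact hfmass
  have key := core_virtual_value n hn L g h hg hh hmass
  have e1 : (∫ l in (1 : ℝ)..L, (l * xb l - ∫ z in (1 : ℝ)..l, xb z) * F l ^ (n - 1) * f l)
      = ∫ l in (1 : ℝ)..L,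
          (l * h l - ∫ z in (1 : ℝ)..l, h z) * (∫ z in (1 : ℝ)..l, g z) ^ (n - 1) * g l :=
    intervalIntegral.integral_congr fun l hl => by
      have hl' : l ∈ Set.Icc (1 : ℝ) L := (Set.uIcc_of_le hL) ▸ hl
      rw [heqx l hl', heqf l hl', hFcong l hl', hGcong l hl']
  have e2 : (∫ l in (1 : ℝ)..L, ((n : ℝ) * l * F l ^ (n - 1) * f l - (1 - F l ^ n)) * xb l)
      = ∫ l in (1 : ℝ)..L,
          ((n : ℝ) * l * (∫ z in (1 : ℝ)..l, g z) ^ (n - 1) * g l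
            - (1 - (∫ z in (1 : ℝ)..l, g z) ^ n)) * h l :=
    intervalIntegral.integral_congr fun l hl => by
      have hl' : l ∈ Set.Icc (1 : ℝ) L := (Set.uIcc_of_le hL) ▸ hl
      rw [heqx l hl', heqf l hl', hFcong l hl']
  rw [e1, e2]
  exact key
end
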